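/- arXiv:2312.06257 — 2 statements merged into one kernel-verified Lean document; each statement's English description precedes it below -/
import Mathlib

section
/- Let R be a ring and let m, n, p, q be non-negative integers with m + n = p + q. Then R is (m,n)-regularly nil clean if and only if R is (p,q)-regularly nil clean. -/
section Aux

variable {R : Type*} [Ring R]

private lemma nilp_swap {x y : R} (h : IsNilpotent (x * y)) : IsNilpotent (y * x) := by
  obtain ⟨k, hk⟩ := h
  refine ⟨k + 1, ?_⟩
  have key : ∀ j : ℕ, (y * x) ^ (j + 1) = y * (x * y) ^ j * x := by
    intro j
    induction j with
    | zero => simp [mul_assoc]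
    | succ j ih =>
      rw [pow_succ, ih, pow_succ]
      simp only [mul_assoc]
  rw [key, hk, mul_zero, zero_mul]

private def RNC (R : Type*) [Ring R] (m n : ℕ) : Prop :=
  ∀ a : R, ∃ e r : R, e = a ^ m * r * a ^ n ∧ IsIdempotentElem e ∧
    IsNilpotent (a ^ m * (1 - e) * a ^ n)

private lemma shiftF {m n : ℕ} (h : RNC R (m + 1) n) : RNC R m (n + 1) := by
  intro a
  obtain ⟨e, r, he, hid, hnil⟩ := h a
  set v := a ^ m * r * a ^ n with hv
  have huv : a * v = e := by
    rw [he, hv, pow_succ']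
    simp only [mul_assoc]
  refine ⟨v * e * a, r * a ^ (n + m + 1) * r, ?_, ?_, ?_⟩
  · rw [hv, he]
    simp only [pow_add, pow_succ, pow_one, mul_assoc]
  · show v * e * a * (v * e * a) = v * e * a
    calc v * e * a * (v * e * a) = v * e * (a * v * e) * a := by
          simp only [mul_assoc]
      _ = v * (e * e * e) * a := by rw [huv]; simp only [mul_assoc]
      _ = v * e * a := by rw [hid.eq, hid.eq]
  · have key : a * (1 - v * e * a) = (1 - e) * a := by
      have h0 : a * (v * e * a) = e * a := by
        rw [← mul_assoc, ← mul_assoc, huv, hid.eq]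
      rw [mul_sub, sub_mul, mul_one, one_mul, h0]
    have s1 : IsNilpotent ((a ^ m * (1 - e) * a ^ n) * a) := by
      apply nilp_swap
      have : a * (a ^ m * (1 - e) * a ^ n) = a ^ (m + 1) * (1 - e) * a ^ n := by
        rw [pow_succ']; simp only [mul_assoc]
      rw [this]; exact hnil
    have s2 : a ^ (m + 1) * (1 - v * e * a) * a ^ n = (a ^ m * (1 - e) * a ^ n) * a := by
      calc a ^ (m + 1) * (1 - v * e * a) * a ^ n
          = a ^ m * (a * (1 - v * e * a)) * a ^ n := by
            rw [pow_succ]; simp only [mul_assoc]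
        _ = a ^ m * ((1 - e) * a) * a ^ n := by rw [key]
        _ = (a ^ m * (1 - e) * a ^ n) * a := by
            simp only [mul_assoc]
            rw [← pow_succ', ← pow_succ]
    have s3 : IsNilpotent ((a ^ m * (1 - v * e * a) * a ^ n) * a) := by
      apply nilp_swap
      have : a * (a ^ m * (1 - v * e * a) * a ^ n)
          = a ^ (m + 1) * (1 - v * e * a) * a ^ n := by
        rw [pow_succ']; simp only [mul_assoc]
      rw [this, s2]; exact s1
    have s4 : a ^ m * (1 - v * e * a) * a ^ (n + 1)
        = (a ^ m * (1 - v * e * a) * a ^ n) * a := by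
      rw [pow_succ]; simp only [mul_assoc]
    rw [s4]; exact s3

private lemma shiftB {m n : ℕ} (h : RNC R m (n + 1)) : RNC R (m + 1) n := by
  intro a
  obtain ⟨e, r, he, hid, hnil⟩ := h a
  set v := a ^ m * r * a ^ n with hv
  have hvu : v * a = e := by
    rw [he, hv, pow_succ]
    simp only [mul_assoc]
  refine ⟨a * e * v, r * (a ^ (n + 1) * a ^ m) * r, ?_, ?_, ?_⟩
  · rw [hv, he]
    simp only [pow_succ', mul_assoc]
  · show a * e * v * (a * e * v) = a * e * v
    calc a * e * v * (a * e * v) = a * (e * (v * a) * e) * v := by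
          simp only [mul_assoc]
      _ = a * (e * e * e) * v := by rw [hvu]
      _ = a * e * v := by rw [hid.eq, hid.eq]
  · have key : (1 - a * e * v) * a = a * (1 - e) := by
      have h0 : a * e * v * a = a * e := by
        rw [mul_assoc, hvu, mul_assoc, hid.eq]
      rw [sub_mul, mul_sub, one_mul, mul_one, h0]
    have s1 : IsNilpotent (a * (a ^ m * (1 - e) * a ^ n)) := by
      apply nilp_swap
      have : (a ^ m * (1 - e) * a ^ n) * a = a ^ m * (1 - e) * a ^ (n + 1) := by
        rw [pow_succ]; simp only [mul_assoc]
      rw [this]; exact hnil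
    have s2 : (a ^ m * (1 - a * e * v) * a ^ n) * a = a * (a ^ m * (1 - e) * a ^ n) := by
      calc (a ^ m * (1 - a * e * v) * a ^ n) * a
          = a ^ m * ((1 - a * e * v) * a) * a ^ n := by
            have hcomm : a ^ n * a = a * a ^ n := by rw [← pow_succ, ← pow_succ']
            simp only [mul_assoc]
            rw [hcomm]
        _ = a ^ m * (a * (1 - e)) * a ^ n := by rw [key]
        _ = a * (a ^ m * (1 - e) * a ^ n) := by
            have hcomm : a ^ m * a = a * a ^ m := by rw [← pow_succ, ← pow_succ']
            rw [← mul_assoc, hcomm]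
            simp only [mul_assoc]
    have s3 : IsNilpotent (a * (a ^ m * (1 - a * e * v) * a ^ n)) := by
      apply nilp_swap
      rw [s2]; exact s1
    have s4 : a ^ (m + 1) * (1 - a * e * v) * a ^ n
        = a * (a ^ m * (1 - a * e * v) * a ^ n) := by
      rw [pow_succ']; simp only [mul_assoc]
    rw [s4]; exact s3

private lemma toZero (m n : ℕ) : RNC R m n ↔ RNC R 0 (m + n) := by
  induction m generalizing n with
  | zero => rw [Nat.zero_add]
  | succ k ih =>
    constructor
    · intro h
      have := (ih (n + 1)).mp (shiftF h)
      rwa [show k + (n + 1) = k + 1 + n by omega] at this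
    · intro h
      apply shiftB
      rw [ih (n + 1), show k + (n + 1) = k + 1 + n by omega]
      exact h

end Aux

theorem stmt_2 {R : Type*} [Ring R] (m n p q : ℕ) (h : m + n = p + q) :
    (∀ a : R, ∃ e r : R, e = a ^ m * r * a ^ n ∧ IsIdempotentElem e ∧
        IsNilpotent (a ^ m * (1 - e) * a ^ n)) ↔
    (∀ a : R, ∃ e r : R, e = a ^ p * r * a ^ q ∧ IsIdempotentElem e ∧
        IsNilpotent (a ^ p * (1 - e) * a ^ q)) := by
  show RNC R m n ↔ RNC R p q
  rw [toZero m n, toZero p q, h]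
end

section
/- For any ring R, the following are equivalent: (1) for every x ∈ R there exists y ∈ R with x - x^2 y nilpotent; (2) for every x ∈ R there exists y ∈ R with x - x y x nilpotent; (3) for every x ∈ R there exists y ∈ R with x - y x^2 nilpotent. -/
lemma nilp_key {R : Type*} [Ring R] (a b : R) :
    ∀ n, (b * a) ^ (n + 1) = b * (a * b) ^ n * a := by
  intro n
  induction n with
  | zero => simp [pow_succ]
  | succ k ih =>
      rw [pow_succ, ih, pow_succ]
      noncomm_ring

lemma nilp_swap_s7 {R : Type*} [Ring R] {a b : R} (h : IsNilpotent (a * b)) :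
    IsNilpotent (b * a) := by
  obtain ⟨n, hn⟩ := h
  exact ⟨n + 1, by rw [nilp_key, hn, mul_zero, zero_mul]⟩

theorem stmt_7 {R : Type*} [Ring R] :
    ((∀ x : R, ∃ y : R, IsNilpotent (x - x ^ 2 * y)) ↔
      (∀ x : R, ∃ y : R, IsNilpotent (x - x * y * x))) ∧
    ((∀ x : R, ∃ y : R, IsNilpotent (x - x * y * x)) ↔
      (∀ x : R, ∃ y : R, IsNilpotent (x - y * x ^ 2))) := by
  constructor
  · constructor
    · intro h x
      obtain ⟨y, hy⟩ := h x
      refine ⟨y, ?_⟩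
      have h1 : x - x ^ 2 * y = x * (1 - x * y) := by noncomm_ring
      have h2 : (1 - x * y) * x = x - x * y * x := by noncomm_ring
      rw [h1] at hy
      simpa [h2] using nilp_swap_s7 hy
    · intro h x
      obtain ⟨y, hy⟩ := h x
      refine ⟨y, ?_⟩
      have h1 : x - x * y * x = (1 - x * y) * x := by noncomm_ring
      have h2 : x * (1 - x * y) = x - x ^ 2 * y := by noncomm_ring
      rw [h1] at hy
      simpa [h2] using nilp_swap_s7 hy
  · constructor
    · intro h x
      obtain ⟨y, hy⟩ := h x
      refine ⟨y, ?_⟩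
      have h1 : x - x * y * x = x * (1 - y * x) := by noncomm_ring
      have h2 : (1 - y * x) * x = x - y * x ^ 2 := by noncomm_ring
      rw [h1] at hy
      simpa [h2] using nilp_swap_s7 hy
    · intro h x
      obtain ⟨y, hy⟩ := h x
      refine ⟨y, ?_⟩
      have h1 : x - y * x ^ 2 = (1 - y * x) * x := by noncomm_ring
      have h2 : x * (1 - y * x) = x - x * y * x := by noncomm_ring
      rw [h1] at hy
      simpa [h2] using nilp_swap_s7 hy
end
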